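/- Let U be a supertropical monoid with associated supertropical semiring Û = U/E(U,S(U)) and canonical map σ_U: U → Û. Then σ_U is universal among fiber contractions to semirings: any fiber contraction α: U → V with V a supertropical semiring factors uniquely as α = β∘σ_U with β: Û → V a fiber contraction. -/

import Mathlib

universe u v w

class STM (U : Type u) extends CommMonoid U, Zero U where
  zero_mul' : ∀ x : U, 0 * x = 0
  e : U
  e_idem : e * e = e
  ghost_zero : ∀ x : U, e * x = 0 → x = 0
  le : U → U → Prop
  le_refl : ∀ x : U, le x x
  le_trans : ∀ x y z : U, le x y → le y z → le x z
  le_total : ∀ x y : U, le x y ∨ le y x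
  le_antisymm : ∀ x y : U, e * x = x → e * y = y → le x y → le y x → x = y
  le_e : ∀ x y : U, le x y ↔ le (e * x) (e * y)
  mul_le_mul : ∀ x y z : U, le x y → le (x * z) (y * z)
  zero_le : ∀ x : U, le 0 x

namespace STM

variable {U : Type u} [STM U]

/-- `x` is a ghost element, i.e. `x ∈ eU`. -/
def Ghost (x : U) : Prop := e * x = x

/-- strict inequality for the ordering of the ghost ideal -/
def slt (x y : U) : Prop := le x y ∧ ¬ le y x

open scoped Classical in
/-- the forced addition on a supertropical monoid -/
noncomputable def add (x y : U) : U :=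
  if slt (e * x) (e * y) then y
  else if slt (e * y) (e * x) then x
  else e * x

/-- the supertropical monoid `U` "is" a (supertropical) semiring: the forced
addition is associative and distributive. -/
def IsSemiring (U : Type u) [STM U] : Prop :=
  (∀ x y z : U, add (add x y) z = add x (add y z)) ∧
  (∀ x y z : U, add x y * z = add (x * z) (y * z))

end STM

open STM

/-- A transmission between supertropical monoids. -/
structure IsTransmission {U : Type u} {V : Type v} [STM U] [STM V] (α : U → V) : Prop where
  map_zero : α 0 = 0
  map_one : α 1 = 1
  map_mul : ∀ x y : U, α (x * y) = α x * α y
  map_e : α (STM.e : U) = (STM.e : V)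
  mono : ∀ x y : U, Ghost x → Ghost y → STM.le x y → STM.le (α x) (α y)


/-- The set of tangible NC-products in `U`. -/
def NCset (U : Type u) [STM U] : Set U :=
  {x : U | ¬ Ghost x ∧ ∃ y z y' : U, x = y * z ∧ Ghost y' ∧ slt y' (STM.e * y) ∧
      y' * z = STM.e * y * z}

/-- The ideal `U·S(U) ∪ eU` of `U` generated by the tangible NC-products and the ghosts. -/
def NCideal (U : Type u) [STM U] : Set U :=
  {x : U | Ghost x ∨ ∃ u s : U, s ∈ NCset U ∧ x = u * s}

/-- The TE-relation `E(U, U·S(U) ∪ eU)` identifying each element of the ideal with its ghost. -/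
def NCrel (U : Type u) [STM U] : U → U → Prop := fun x y =>
  x = y ∨ (x ∈ NCideal U ∧ y ∈ NCideal U ∧ STM.e * x = STM.e * y)

/-- A fiber contraction: a surjective transmission whose ghost part is an isomorphism. -/
def IsFiberContraction {U : Type u} {V : Type v} [STM U] [STM V] (α : U → V) : Prop :=
  IsTransmission α ∧ Function.Surjective α ∧
  ∀ x y : U, Ghost x → Ghost y → α x = α y → x = y

/-!
In a supertropical semiring `a' < ea` and `a'b = eab` force `ab = (a' + a)b = eab + ab` to be
ghost. So a fiber contraction `α` to a semiring sends the ideal generated by `S(U)` and the ghosts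
into the ghost ideal, and is therefore constant on the classes of `E(U, S(U))`, i.e. on the fibers
of `σ_U`. Since `E(U, S(U))` is trivial on ghosts, `σ_U` is itself a fiber contraction, and `α`
descends along it; the induced map inherits multiplicativity, monotonicity and ghost-injectivity
through ghost preimages under `σ_U`.
-/

namespace STM

variable {U : Type u} [STM U]

lemma slt_irrefl (x : U) : ¬ slt x x := fun h => h.2 (le_refl x)

lemma ghost_e_mul (x : U) : Ghost (e * x) := by
  show e * (e * x) = e * x
  rw [← mul_assoc, e_idem]

lemma Ghost.mul_left {x : U} (hx : Ghost x) (y : U) : Ghost (y * x) := by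
  show e * (y * x) = y * x
  rw [mul_left_comm, show e * x = x from hx]

lemma add_eq_right_of_slt {x y : U} (h : slt (e * x) (e * y)) : add x y = y := by
  rw [add, if_pos h]

lemma add_eq_e_mul_of_e_mul_eq {x y : U} (h : e * x = e * y) : add x y = e * x := by
  rw [add, h, if_neg (slt_irrefl _), if_neg (slt_irrefl _)]

lemma IsSemiring.ghost_mul_of_slt (hU : IsSemiring U) {a b a' : U} (ha' : Ghost a')
    (hlt : slt a' (e * a)) (heq : a' * b = e * a * b) : Ghost (a * b) := by
  have hsum : add a' a = a := add_eq_right_of_slt (by rwa [show e * a' = a' from ha'])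
  have hdistrib := hU.2 a' a b
  rw [hsum, heq, add_eq_e_mul_of_e_mul_eq (by simp only [← mul_assoc, e_idem]),
    ← mul_assoc, ← mul_assoc, e_idem] at hdistrib
  show e * (a * b) = a * b
  rw [← mul_assoc]
  exact hdistrib.symm

end STM

section Transmission

variable {U : Type u} {V : Type v} [STM U] [STM V] {α : U → V}

lemma IsTransmission.map_e_mul (hα : IsTransmission α) (x : U) : α (e * x) = e * α x := by
  rw [hα.map_mul, hα.map_e]

lemma IsTransmission.ghost (hα : IsTransmission α) {x : U} (hx : Ghost x) : Ghost (α x) := by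
  show e * α x = α x
  rw [← hα.map_e_mul, show e * x = x from hx]

lemma IsTransmission.exists_ghost_preimage (hα : IsTransmission α)
    (hsurj : Function.Surjective α) {a : V} (ha : Ghost a) : ∃ x, Ghost x ∧ α x = a := by
  obtain ⟨x, rfl⟩ := hsurj a
  exact ⟨e * x, ghost_e_mul x, by rw [hα.map_e_mul]; exact ha⟩

lemma IsFiberContraction.map_slt (hα : IsFiberContraction α) {x y : U} (hx : Ghost x)
    (hy : Ghost y) (hlt : slt x y) : slt (α x) (α y) := by
  refine ⟨hα.1.mono x y hx hy hlt.1, fun hle => hlt.2 ?_⟩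
  have hxy := le_antisymm _ _ (hα.1.ghost hx) (hα.1.ghost hy) (hα.1.mono x y hx hy hlt.1) hle
  rw [hα.2.2 x y hx hy hxy]
  exact le_refl y

lemma IsFiberContraction.ghost_of_mem_NCideal (hα : IsFiberContraction α) (hV : IsSemiring V)
    {x : U} (hx : x ∈ NCideal U) : Ghost (α x) := by
  rcases hx with hx | ⟨u, _, ⟨-, y, z, y', rfl, hy', hlt, heq⟩, rfl⟩
  · exact hα.1.ghost hx
  rw [hα.1.map_mul, hα.1.map_mul]
  refine (hV.ghost_mul_of_slt (hα.1.ghost hy') ?_ ?_).mul_left (α u)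
  · rw [← hα.1.map_e_mul]
    exact hα.map_slt hy' (ghost_e_mul y) hlt
  · rw [← hα.1.map_mul, heq, hα.1.map_mul, hα.1.map_e_mul]

lemma IsFiberContraction.eq_of_NCrel (hα : IsFiberContraction α) (hV : IsSemiring V)
    {x y : U} (h : NCrel U x y) : α x = α y := by
  rcases h with rfl | ⟨hx, hy, he⟩
  · rfl
  rw [← show e * α x = α x from hα.ghost_of_mem_NCideal hV hx,
    ← show e * α y = α y from hα.ghost_of_mem_NCideal hV hy,
    ← hα.1.map_e_mul, ← hα.1.map_e_mul, he]

end Transmission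

lemma NCrel.eq_of_ghost {U : Type u} [STM U] {x y : U} (h : NCrel U x y) (hx : Ghost x)
    (hy : Ghost y) : x = y := by
  rcases h with h | ⟨-, -, he⟩
  · exact h
  rw [← show e * x = x from hx, ← show e * y = y from hy, he]

section Factorization

variable {U : Type u} {W : Type v} {V : Type w} [STM U] [STM W] [STM V]
  {σ : U → W} {α : U → V} {β : W → V}

lemma IsTransmission.of_comp (hσ : IsFiberContraction σ) (hα : IsTransmission α)
    (hcomp : ∀ x, β (σ x) = α x) : IsTransmission β where
  map_zero := by rw [← hσ.1.map_zero, hcomp, hα.map_zero]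
  map_one := by rw [← hσ.1.map_one, hcomp, hα.map_one]
  map_mul a b := by
    obtain ⟨x, rfl⟩ := hσ.2.1 a
    obtain ⟨y, rfl⟩ := hσ.2.1 b
    rw [← hσ.1.map_mul, hcomp, hcomp, hcomp, hα.map_mul]
  map_e := by rw [← hσ.1.map_e, hcomp, hα.map_e]
  mono a b ha hb hle := by
    obtain ⟨x, hx, rfl⟩ := hσ.1.exists_ghost_preimage hσ.2.1 ha
    obtain ⟨y, hy, rfl⟩ := hσ.1.exists_ghost_preimage hσ.2.1 hb
    rw [hcomp, hcomp]
    rcases le_total x y with hxy | hyx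
    · exact hα.mono x y hx hy hxy
    -- `σ x ≤ σ y ≤ σ x` and `σ` is injective on ghosts, so `x = y`
    · obtain rfl := hσ.2.2 x y hx hy (le_antisymm _ _ ha hb hle (hσ.1.mono y x hy hx hyx))
      exact le_refl _

lemma IsFiberContraction.of_comp (hσ : IsFiberContraction σ) (hα : IsFiberContraction α)
    (hcomp : ∀ x, β (σ x) = α x) : IsFiberContraction β := by
  refine ⟨.of_comp hσ hα.1 hcomp, fun v => ?_, fun a b ha hb hab => ?_⟩
  · obtain ⟨x, rfl⟩ := hα.2.1 v
    exact ⟨σ x, hcomp x⟩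
  · obtain ⟨x, hx, rfl⟩ := hσ.1.exists_ghost_preimage hσ.2.1 ha
    obtain ⟨y, hy, rfl⟩ := hσ.1.exists_ghost_preimage hσ.2.1 hb
    rw [hcomp, hcomp] at hab
    rw [hα.2.2 x y hx hy hab]

lemma IsFiberContraction.existsUnique_factor (hσ : IsFiberContraction σ)
    (hα : IsFiberContraction α) (hker : ∀ x y, σ x = σ y → α x = α y) :
    ∃! β : W → V, IsFiberContraction β ∧ ∀ x, β (σ x) = α x := by
  have hcomp : ∀ x, α (Function.surjInv hσ.2.1 (σ x)) = α x := fun x =>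
    hker _ _ (Function.surjInv_eq hσ.2.1 (σ x))
  refine ⟨α ∘ Function.surjInv hσ.2.1, ⟨.of_comp hσ hα hcomp, hcomp⟩, ?_⟩
  rintro β' ⟨-, hcomp'⟩
  funext v
  obtain ⟨x, rfl⟩ := hσ.2.1 v
  rw [hcomp', Function.comp_apply, hcomp]

end Factorization

/-- Universal property of `σ_U : U → Û`: every fiber contraction `α : U → V` to a
supertropical semiring factors uniquely through `σ_U` by a fiber contraction. -/
theorem associated_semiring_universal {U : Type u} {Uh : Type v} [STM U] [STM Uh]
    (σ : U → Uh) (hσ : IsTransmission σ) (hsurjσ : Function.Surjective σ)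
    (hker : ∀ x y : U, σ x = σ y ↔ NCrel U x y) :
    ∀ (V : Type w) [STM V] (α : U → V), IsFiberContraction α → IsSemiring V →
      ∃! β : Uh → V, IsFiberContraction β ∧ ∀ x : U, β (σ x) = α x := by
  intro V _ α hα hV
  have hσ_fiber : IsFiberContraction σ :=
    ⟨hσ, hsurjσ, fun x y hx hy h => ((hker x y).1 h).eq_of_ghost hx hy⟩
  exact hσ_fiber.existsUnique_factor hα fun x y h => hα.eq_of_NCrel hV ((hker x y).1 h)
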